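/- arXiv:cs/9911004 — 4 statements merged into one kernel-verified Lean document; each statement's English description precedes it below -/
import Mathlib

section
/- For all natural numbers n and m there exists a natural number r such that every edge 2-coloring of the complete graph K_r contains either a red monochromatic K_n or a green monochromatic K_m; that is, the Ramsey number Ramsey(n,m) is finite for all (n,m) ∈ ℕ². -/
def MonoOn {V : Type} (f : Sym2 V → Bool) (c : Bool) (n : ℕ) : Prop :=
  ∃ s : Finset V, s.card = n ∧ ∀ a ∈ s, ∀ b ∈ s, a ≠ b → f s(a, b) = c

lemma mono_map {V W : Type} (e : V ↪ W) (f : Sym2 W → Bool) (c : Bool) (n : ℕ)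
    (h : MonoOn (fun p => f (p.map e)) c n) : MonoOn f c n := by
  obtain ⟨s, hs, hmono⟩ := h
  refine ⟨s.map e, by simp [hs], ?_⟩
  intro a ha b hb hab
  simp only [Finset.mem_map] at ha hb
  obtain ⟨a', ha', rfl⟩ := ha
  obtain ⟨b', hb', rfl⟩ := hb
  have := hmono a' ha' b' hb' (fun h => hab (by rw [h]))
  simpa [Sym2.map_pair_eq] using this

lemma ramsey_gen : ∀ n m : ℕ, ∃ r : ℕ, ∀ (V : Type) [Fintype V] [DecidableEq V],
    r ≤ Fintype.card V → ∀ f : Sym2 V → Bool, MonoOn f true n ∨ MonoOn f false m := by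
  intro n
  induction n with
  | zero =>
    intro m
    exact ⟨0, fun V _ _ _ f => Or.inl ⟨∅, by simp, by simp⟩⟩
  | succ n ihn =>
    intro m
    induction m with
    | zero =>
      exact ⟨0, fun V _ _ _ f => Or.inr ⟨∅, by simp, by simp⟩⟩
    | succ m ihm =>
      obtain ⟨r1, h1⟩ := ihn (m + 1)
      obtain ⟨r2, h2⟩ := ihm
      refine ⟨r1 + r2 + 1, ?_⟩
      intro V _ _ hcard f
      have hpos : 0 < Fintype.card V := by omega
      obtain ⟨v⟩ := Fintype.card_pos_iff.mp hpos
      set R : Finset V := (Finset.univ.erase v).filter (fun u => f s(v, u) = true) with hR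
      set G : Finset V := (Finset.univ.erase v).filter (fun u => ¬ (f s(v, u) = true)) with hG
      have hsum : R.card + G.card = (Finset.univ.erase v).card :=
        Finset.card_filter_add_card_filter_not _
      have hcard' : (Finset.univ.erase v).card = Fintype.card V - 1 := by
        simp [Finset.card_erase_of_mem]
      have hsplit : r1 ≤ R.card ∨ r2 ≤ G.card := by omega
      -- common sub-facts
      rcases hsplit with hle | hle
      · -- red neighborhood large
        have hc : r1 ≤ Fintype.card {u // u ∈ R} := by simpa [Fintype.card_coe] using hle
        have := h1 {u // u ∈ R} hc (fun p => f (p.map (Function.Embedding.subtype _)))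
        rcases this with hred | hgreen
        · -- red K_n inside R, add v
          obtain ⟨s', hs', hmono⟩ := hred
          refine Or.inl ⟨insert v (s'.map (Function.Embedding.subtype _)), ?_, ?_⟩
          · have hvnot : v ∉ s'.map (Function.Embedding.subtype (· ∈ R)) := by
              simp only [Finset.mem_map]
              rintro ⟨⟨u, hu⟩, _, heq⟩
              have := (Finset.mem_filter.mp hu).1
              exact (Finset.mem_erase.mp this).1 heq
            rw [Finset.card_insert_of_notMem hvnot, Finset.card_map, hs']
          · intro a ha b hb hab
            have key : ∀ u, u ∈ s'.map (Function.Embedding.subtype (· ∈ R)) → f s(v, u) = true := by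
              intro u hu
              simp only [Finset.mem_map] at hu
              obtain ⟨⟨u', hu'⟩, _, rfl⟩ := hu
              exact (Finset.mem_filter.mp hu').2
            rcases Finset.mem_insert.mp ha with hav | ha'
            · rcases Finset.mem_insert.mp hb with hbv | hb'
              · exact absurd (hav.trans hbv.symm) hab
              · rw [hav]; exact key b hb'
            · rcases Finset.mem_insert.mp hb with hbv | hb'
              · rw [hbv, Sym2.eq_swap]; exact key a ha'
              · simp only [Finset.mem_map] at ha' hb'
                obtain ⟨a', ha', rfl⟩ := ha'
                obtain ⟨b', hb', rfl⟩ := hb'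
                have := hmono a' ha' b' hb' (fun h => hab (by rw [h]))
                simpa [Sym2.map_pair_eq] using this
        · exact Or.inr (mono_map _ f false (m + 1) hgreen)
      · -- green neighborhood large
        have hc : r2 ≤ Fintype.card {u // u ∈ G} := by simpa [Fintype.card_coe] using hle
        have := h2 {u // u ∈ G} hc (fun p => f (p.map (Function.Embedding.subtype _)))
        rcases this with hred | hgreen
        · exact Or.inl (mono_map _ f true (n + 1) hred)
        · obtain ⟨s', hs', hmono⟩ := hgreen
          refine Or.inr ⟨insert v (s'.map (Function.Embedding.subtype _)), ?_, ?_⟩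
          · have hvnot : v ∉ s'.map (Function.Embedding.subtype (· ∈ G)) := by
              simp only [Finset.mem_map]
              rintro ⟨⟨u, hu⟩, _, heq⟩
              have := (Finset.mem_filter.mp hu).1
              exact (Finset.mem_erase.mp this).1 heq
            rw [Finset.card_insert_of_notMem hvnot, Finset.card_map, hs']
          · intro a ha b hb hab
            have key : ∀ u, u ∈ s'.map (Function.Embedding.subtype (· ∈ G)) → f s(v, u) = false := by
              intro u hu
              simp only [Finset.mem_map] at hu
              obtain ⟨⟨u', hu'⟩, _, rfl⟩ := hu
              simpa using (Finset.mem_filter.mp hu').2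
            rcases Finset.mem_insert.mp ha with hav | ha'
            · rcases Finset.mem_insert.mp hb with hbv | hb'
              · exact absurd (hav.trans hbv.symm) hab
              · rw [hav]; exact key b hb'
            · rcases Finset.mem_insert.mp hb with hbv | hb'
              · rw [hbv, Sym2.eq_swap]; exact key a ha'
              · simp only [Finset.mem_map] at ha' hb'
                obtain ⟨a', ha', rfl⟩ := ha'
                obtain ⟨b', hb', rfl⟩ := hb'
                have := hmono a' ha' b' hb' (fun h => hab (by rw [h]))
                simpa [Sym2.map_pair_eq] using this


/-- An edge 2-coloring of `K_r` (as a function on unordered pairs of vertices,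
`true` = red, `false` = green) contains a monochromatic `K_n` in color `c` if there is a
set of `n` vertices all of whose connecting edges receive color `c`. -/
def HasMonoClique {r : ℕ} (f : Sym2 (Fin r) → Bool) (c : Bool) (n : ℕ) : Prop :=
  ∃ s : Finset (Fin r), s.card = n ∧ ∀ a ∈ s, ∀ b ∈ s, a ≠ b → f s(a, b) = c

/-- Ramsey's theorem: for all `n m : ℕ` there is an `r : ℕ` such that every red/green
edge coloring of the complete graph `K_r` contains a red monochromatic `K_n` or a green
monochromatic `K_m`; in particular `Ramsey(n, m)` is finite for all `(n, m) ∈ ℕ²`. -/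
theorem ramsey_finite (n m : ℕ) :
    ∃ r : ℕ, ∀ f : Sym2 (Fin r) → Bool,
      HasMonoClique f true n ∨ HasMonoClique f false m := by

  obtain ⟨r, hr⟩ := ramsey_gen n m
  exact ⟨r, fun f => hr (Fin r) (by simp) f⟩
end

section
/- Every graph has a Ramsey graph: for every finite simple graph A there exists a finite simple graph G such that G arrows A, i.e., for every red/green coloring of the edges of G, either the red subgraph of G or the green subgraph of G contains a subgraph isomorphic to A. -/
/-- Finite Ramsey theorem, in a form suitable for the main theorem: for all `s t` there
is `N` such that any finset `V` with at least `N` elements, with its pairs colored by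
`Bool`, contains a subset of at least `s` elements all of whose pairs are `true`, or a
subset of at least `t` elements all of whose pairs are `false`. -/
theorem ramsey_aux : ∀ n s t : ℕ, s + t ≤ n → ∃ N : ℕ,
    ∀ {α : Type} [DecidableEq α] (V : Finset α) (f : Sym2 α → Bool), N ≤ V.card →
      ∃ S ⊆ V, (s ≤ S.card ∧ ∀ a ∈ S, ∀ b ∈ S, a ≠ b → f s(a, b) = true) ∨
        (t ≤ S.card ∧ ∀ a ∈ S, ∀ b ∈ S, a ≠ b → f s(a, b) = false) := by
  intro n
  induction n with
  | zero =>
    intro s t hst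
    refine ⟨0, fun V f _ => ⟨∅, Finset.empty_subset _, Or.inl ⟨by omega, by simp⟩⟩⟩
  | succ n ih =>
    intro s t hst
    match s, t with
    | 0, t =>
      exact ⟨0, fun V f _ => ⟨∅, Finset.empty_subset _, Or.inl ⟨by omega, by simp⟩⟩⟩
    | s + 1, 0 =>
      exact ⟨0, fun V f _ => ⟨∅, Finset.empty_subset _, Or.inr ⟨by omega, by simp⟩⟩⟩
    | s + 1, t + 1 =>
      obtain ⟨N₁, h₁⟩ := ih s (t + 1) (by omega)
      obtain ⟨N₂, h₂⟩ := ih (s + 1) t (by omega)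
      refine ⟨N₁ + N₂ + 1, ?_⟩
      intro α _ V f hV
      have hVne : V.Nonempty := Finset.card_pos.mp (by omega)
      obtain ⟨v, hv⟩ := hVne
      set T := V.erase v with hT
      have hTcard : V.card - 1 = T.card := (Finset.card_erase_of_mem hv).symm
      set Tt := T.filter (fun u => f s(v, u) = true) with hTt
      set Tf := T.filter (fun u => ¬ (f s(v, u) = true)) with hTf
      have hsum : Tt.card + Tf.card = T.card := Finset.card_filter_add_card_filter_not _
      have hcases : N₁ ≤ Tt.card ∨ N₂ ≤ Tf.card := by omega
      rcases hcases with hc | hc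
      · obtain ⟨S, hS, hmono⟩ := h₁ Tt f hc
        have hSV : S ⊆ V := hS.trans ((Finset.filter_subset _ _).trans (Finset.erase_subset _ _))
        rcases hmono with ⟨hcard, hmono⟩ | ⟨hcard, hmono⟩
        · refine ⟨insert v S, ?_, Or.inl ⟨?_, ?_⟩⟩
          · exact Finset.insert_subset hv hSV
          · have hvS : v ∉ S := fun h => Finset.notMem_erase v V
              ((Finset.filter_subset _ _) (hS h))
            rw [Finset.card_insert_of_notMem hvS]; omega
          · intro a ha b hb hab
            rcases Finset.mem_insert.mp ha with rfl | ha'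
            · have hb' : b ∈ S := by
                rcases Finset.mem_insert.mp hb with rfl | hb; · exact absurd rfl hab
                · exact hb
              have := hS hb'
              simpa [hTt] using (Finset.mem_filter.mp this).2
            · rcases Finset.mem_insert.mp hb with rfl | hb'
              · have := hS ha'
                have : f s(b, a) = true := by
                  simpa [hTt] using (Finset.mem_filter.mp this).2
                rwa [Sym2.eq_swap]
              · exact hmono a ha' b hb' hab
        · exact ⟨S, hSV, Or.inr ⟨hcard, hmono⟩⟩
      · obtain ⟨S, hS, hmono⟩ := h₂ Tf f hc
        have hSV : S ⊆ V := hS.trans ((Finset.filter_subset _ _).trans (Finset.erase_subset _ _))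
        rcases hmono with ⟨hcard, hmono⟩ | ⟨hcard, hmono⟩
        · exact ⟨S, hSV, Or.inl ⟨hcard, hmono⟩⟩
        · refine ⟨insert v S, ?_, Or.inr ⟨?_, ?_⟩⟩
          · exact Finset.insert_subset hv hSV
          · have hvS : v ∉ S := fun h => Finset.notMem_erase v V
              ((Finset.filter_subset _ _) (hS h))
            rw [Finset.card_insert_of_notMem hvS]; omega
          · intro a ha b hb hab
            rcases Finset.mem_insert.mp ha with rfl | ha'
            · have hb' : b ∈ S := by
                rcases Finset.mem_insert.mp hb with rfl | hb; · exact absurd rfl hab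
                · exact hb
              have := hS hb'
              simpa [hTf, Bool.not_eq_true] using (Finset.mem_filter.mp this).2
            · rcases Finset.mem_insert.mp hb with rfl | hb'
              · have := hS ha'
                have : f s(b, a) = false := by
                  simpa [hTf, Bool.not_eq_true] using (Finset.mem_filter.mp this).2
                rwa [Sym2.eq_swap]
              · exact hmono a ha' b hb' hab

/-- Every (finite simple) graph has a Ramsey graph: for every graph `A` there exists a
graph `G` such that for every red/green coloring of the edges of `G` (colors given by
`Bool`, values on non-edges being irrelevant), there is a color `c` and an injective map
`φ` from the vertices of `A` to the vertices of `G` carrying every edge of `A` to an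
edge of `G` colored `c`; i.e. the red or the green subgraph of `G` contains a subgraph
isomorphic to `A`. -/
theorem every_graph_has_ramsey_graph (k : ℕ) (A : SimpleGraph (Fin k)) :
    ∃ (N : ℕ) (G : SimpleGraph (Fin N)),
      ∀ f : Sym2 (Fin N) → Bool,
        ∃ (c : Bool) (φ : Fin k → Fin N), Function.Injective φ ∧
          ∀ a b, A.Adj a b → G.Adj (φ a) (φ b) ∧ f s(φ a, φ b) = c := by
  obtain ⟨N, hN⟩ := ramsey_aux (k + k) k k le_rfl
  refine ⟨N, ⊤, ?_⟩
  intro f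
  obtain ⟨S, -, hS⟩ := hN (Finset.univ : Finset (Fin N)) f (by simp)
  have key : ∃ (c : Bool) (S : Finset (Fin N)), k ≤ S.card ∧
      ∀ a ∈ S, ∀ b ∈ S, a ≠ b → f s(a, b) = c := by
    rcases hS with ⟨h1, h2⟩ | ⟨h1, h2⟩
    · exact ⟨true, S, h1, h2⟩
    · exact ⟨false, S, h1, h2⟩
  obtain ⟨c, S, hcard, hmono⟩ := key
  obtain ⟨T, hTS, hTcard⟩ := Finset.exists_subset_card_eq hcard
  refine ⟨c, fun i => (T.orderIsoOfFin hTcard i : Fin N), ?_, ?_⟩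
  · intro a b hab
    exact (T.orderIsoOfFin hTcard).injective (Subtype.ext hab)
  · intro a b hadj
    have hne : a ≠ b := A.ne_of_adj hadj
    have hφne : (T.orderIsoOfFin hTcard a : Fin N) ≠ (T.orderIsoOfFin hTcard b : Fin N) := by
      intro h
      exact hne ((T.orderIsoOfFin hTcard).injective (Subtype.ext h))
    refine ⟨hφne, ?_⟩
    exact hmono _ (hTS (T.orderIsoOfFin hTcard a).2) _ (hTS (T.orderIsoOfFin hTcard b).2) hφne
end

section
/- There exists a red/green edge 2-coloring of the complete graph K_17 on 17 vertices that contains no monochromatic K_4 (no four vertices all six of whose connecting edges have the same color) and in which every vertex is incident to exactly 8 red edges and exactly 8 green edges. -/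
def paley (a b : Fin 17) : Bool :=
  decide (((a.val + 17 - b.val) % 17) ∈ [1, 2, 4, 8, 9, 13, 15, 16])

lemma paley_symm : ∀ a b, paley a b = paley b a := by decide

set_option maxHeartbeats 8000000 in
lemma paley_noK4 : ∀ a b c d : Fin 17, a < b → b < c → c < d →
    ¬ (paley a b = paley a c ∧ paley a b = paley a d ∧ paley a b = paley b c ∧
       paley a b = paley b d ∧ paley a b = paley c d) := by decide

lemma paley_deg : ∀ v : Fin 17,
    (Finset.univ.filter fun w => w ≠ v ∧ paley v w = true).card = 8 ∧
    (Finset.univ.filter fun w => w ≠ v ∧ paley v w = false).card = 8 := by decide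

/-- There is a red/green edge 2-coloring of the complete graph `K_17` (given as a
symmetric function `f : Fin 17 → Fin 17 → Bool`, `true` = red, `false` = green; the
diagonal is irrelevant) containing no monochromatic `K_4` and in which every vertex is
incident to exactly 8 red and exactly 8 green edges. -/
theorem k17_coloring_no_mono_K4_regular :
    ∃ f : Fin 17 → Fin 17 → Bool,
      (∀ a b, f a b = f b a) ∧
      (¬ ∃ (c : Bool) (s : Finset (Fin 17)), s.card = 4 ∧
          ∀ a ∈ s, ∀ b ∈ s, a ≠ b → f a b = c) ∧
      (∀ v : Fin 17,
        (Finset.univ.filter fun w => w ≠ v ∧ f v w = true).card = 8 ∧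
        (Finset.univ.filter fun w => w ≠ v ∧ f v w = false).card = 8) := by
  refine ⟨paley, paley_symm, ?_, paley_deg⟩
  rintro ⟨col, s, hcard, hmono⟩
  have hlen : (s.sort (· ≤ ·)).length = 4 := by rw [Finset.length_sort, hcard]
  have hsorted := (s.sortedLT_sort).pairwise
  have hmem : ∀ x ∈ s.sort (· ≤ ·), x ∈ s := fun x hx => (Finset.mem_sort _).1 hx
  match hl : s.sort (· ≤ ·), hlen with
  | [a, b, c, d], _ =>
    rw [hl] at hsorted hmem
    have ha := hmem a (by simp)
    have hb := hmem b (by simp)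
    have hc := hmem c (by simp)
    have hd := hmem d (by simp)
    simp [List.pairwise_cons] at hsorted
    obtain ⟨⟨hab, hac, had⟩, ⟨hbc, hbd⟩, hcd⟩ := hsorted
    refine paley_noK4 a b c d hab hbc hcd ⟨?_, ?_, ?_, ?_, ?_⟩ <;>
      rw [hmono a ha b hb hab.ne] <;>
      [exact (hmono a ha c hc hac.ne).symm; exact (hmono a ha d hd had.ne).symm;
       exact (hmono b hb c hc hbc.ne).symm; exact (hmono b hb d hd hbd.ne).symm;
       exact (hmono c hc d hd hcd.ne).symm]
end

section
/- There exists a partial red/green coloring of the edges of the complete graph K_18 on 18 vertices in which exactly one of the 153 edges is left uncolored, exactly 76 edges are colored red and exactly 76 edges are colored green, and neither the red edges nor the green edges contain all six edges among some set of four vertices (i.e., there is no monochromatic tetrahedron). -/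
/-- The edges of the complete graph `K_18`: unordered pairs of distinct vertices. -/
abbrev Edge18 := {e : Sym2 (Fin 18) // ¬ e.IsDiag}

/-- The edge of `K_18` joining two distinct vertices. -/
def mkEdge18 (a b : Fin 18) (h : a ≠ b) : Edge18 :=
  ⟨s(a, b), by simpa using h⟩

/-- Quadratic residues mod 17. -/
def qr17 (n : ℕ) : Bool :=
  n = 1 || n = 2 || n = 4 || n = 8 || n = 9 || n = 13 || n = 15 || n = 16

/-- The coloring on ordered pairs. -/
def gcol (a b : Fin 18) : Option Bool :=
  if a = b then none
  else if a.val = 17 then (if b.val = 0 then none else some (qr17 b.val))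
  else if b.val = 17 then (if a.val = 0 then none else some (qr17 a.val))
  else some (qr17 ((a.val + 17 - b.val) % 17))

lemma gcol_symm : ∀ a b : Fin 18, gcol a b = gcol b a := by decide

/-- The coloring. -/
def pcol : Edge18 → Option Bool := fun e => Sym2.lift ⟨gcol, gcol_symm⟩ e.1

lemma pcol_mk (a b : Fin 18) (h : a ≠ b) : pcol (mkEdge18 a b h) = gcol a b := by
  simp [pcol, mkEdge18]

set_option maxHeartbeats 4000000 in
lemma no_mono : ∀ (c : Bool) (a b d e : Fin 18),
    gcol a b = some c → gcol a d = some c → gcol a e = some c →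
    gcol b d = some c → gcol b e = some c → gcol d e = some c → False := by
  decide

/-- There is a partial red/green coloring of the edges of `K_18` (`none` = uncolored,
`some true` = red, `some false` = green) in which exactly one of the 153 edges is
uncolored, exactly 76 edges are red, exactly 76 edges are green, and there is no
monochromatic tetrahedron: no color `c` and set of four vertices all six of whose
connecting edges are colored `c`. -/
theorem k18_one_uncolored_no_mono_tetrahedron :
    ∃ p : Edge18 → Option Bool,
      (Finset.univ.filter fun e : Edge18 => p e = none).card = 1 ∧
      (Finset.univ.filter fun e : Edge18 => p e = some true).card = 76 ∧
      (Finset.univ.filter fun e : Edge18 => p e = some false).card = 76 ∧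
      ¬ ∃ (c : Bool) (s : Finset (Fin 18)), s.card = 4 ∧
          ∀ a ∈ s, ∀ b ∈ s, ∀ h : a ≠ b, p (mkEdge18 a b h) = some c := by
  refine ⟨pcol, ?_, ?_, ?_, ?_⟩
  · decide
  · decide
  · decide
  · rintro ⟨c, s, hcard, hall⟩
    rw [show (4 : ℕ) = 3 + 1 from rfl, Finset.card_eq_succ] at hcard
    obtain ⟨a, t, hat, rfl, ht⟩ := hcard
    rw [Finset.card_eq_three] at ht
    obtain ⟨b, d, e, hbd, hbe, hde, rfl⟩ := ht
    simp only [Finset.mem_insert, Finset.mem_singleton, not_or] at hat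
    have hab : a ≠ b := fun h => hat.1 h
    have had : a ≠ d := fun h => hat.2.1 h
    have hae : a ≠ e := fun h => hat.2.2 h
    have mem : ∀ x ∈ ({b, d, e} : Finset (Fin 18)), x ∈ insert a {b, d, e} :=
      fun x hx => Finset.mem_insert_of_mem hx
    have ha : a ∈ insert a ({b, d, e} : Finset (Fin 18)) := Finset.mem_insert_self _ _
    have hb := mem b (by simp); have hd := mem d (by simp); have he := mem e (by simp)
    exact no_mono c a b d e
      (by rw [← pcol_mk a b hab]; exact hall a ha b hb hab)
      (by rw [← pcol_mk a d had]; exact hall a ha d hd had)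
      (by rw [← pcol_mk a e hae]; exact hall a ha e he hae)
      (by rw [← pcol_mk b d hbd]; exact hall b hb d hd hbd)
      (by rw [← pcol_mk b e hbe]; exact hall b hb e he hbe)
      (by rw [← pcol_mk d e hde]; exact hall d hd e he hde)
end
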